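/- Let δ > 0, β₀ > 0, τ > 0 and β₁ ≥ 0 with β₀β₁ < δ. Then every complex number λ satisfying Δ(λ,τ) = 0 has strictly negative real part. (Consequently the nontrivial equilibrium is linearly stable for all τ > 0 when β₁ ≥ 0.) -/

import Mathlib

/-!
Suppose `Δ(λ,τ) = 0` with `Re λ ≥ 0`. On `[-τ, 0]` we have `|e^{λs}| = e^{s Re λ} ≤ 1`, so the
integral term has real part at most `(2β₀β₁/τ)·τ = 2β₀β₁`. Taking real parts in `Δ(λ,τ) = 0`
then gives `δ + β₀β₁ ≤ Re λ + δ + β₀β₁ ≤ 2β₀β₁`, contradicting `β₀β₁ < δ`.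
-/

/-- The characteristic function
`Δ(λ,τ) = λ + δ + β₀β₁ − (2β₀β₁/τ)∫_{−τ}^{0} e^{λ s} ds`, for `λ ∈ ℂ`. -/
noncomputable def charFn (δ β₀ β₁ τ : ℝ) (lam : ℂ) : ℂ :=
  lam + (δ : ℂ) + (β₀ : ℂ) * (β₁ : ℂ) -
    ((2 * β₀ * β₁ / τ : ℝ) : ℂ) * ∫ s in (-τ)..(0 : ℝ), Complex.exp (lam * (s : ℂ))

open Complex

lemma norm_integral_exp_mul_le_of_re_nonneg {lam : ℂ} (hlam : 0 ≤ lam.re) {τ : ℝ}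
    (hτ : 0 ≤ τ) : ‖∫ s in (-τ)..(0 : ℝ), exp (lam * s)‖ ≤ τ := by
  have hbound : ∀ s ∈ Set.uIoc (-τ) (0 : ℝ), ‖exp (lam * s)‖ ≤ 1 := by
    intro s hs
    rw [Set.uIoc_of_le (by linarith)] at hs
    rw [norm_exp, Real.exp_le_one_iff, re_mul_ofReal]
    exact mul_nonpos_of_nonneg_of_nonpos hlam hs.2
  simpa [abs_of_nonneg hτ] using intervalIntegral.norm_integral_le_of_norm_le_const hbound

lemma re_charFn (δ β₀ β₁ τ : ℝ) (lam : ℂ) :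
    (charFn δ β₀ β₁ τ lam).re = lam.re + δ + β₀ * β₁ -
      2 * β₀ * β₁ / τ * (∫ s in (-τ)..(0 : ℝ), exp (lam * s)).re := by
  simp [charFn]

theorem charFn_zeros_neg_re_of_beta1_nonneg_general
    (δ β₀ β₁ τ : ℝ) (hβ₀ : 0 < β₀) (hτ : 0 < τ)
    (hβ₁ : 0 ≤ β₁) (hlt : β₀ * β₁ < δ) :
    ∀ lam : ℂ, charFn δ β₀ β₁ τ lam = 0 → lam.re < 0 := by
  intro lam hzero
  by_contra! hre
  have hintegral : 2 * β₀ * β₁ / τ * (∫ s in (-τ)..(0 : ℝ), exp (lam * s)).re ≤ 2 * β₀ * β₁ :=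
    calc _ ≤ 2 * β₀ * β₁ / τ * τ := by
          gcongr
          exact (re_le_norm _).trans (norm_integral_exp_mul_le_of_re_nonneg hre hτ.le)
      _ = 2 * β₀ * β₁ := div_mul_cancel₀ _ hτ.ne'
  have hre_zero := re_charFn δ β₀ β₁ τ lam
  rw [hzero, zero_re] at hre_zero
  linarith

/-- if `β₁ ≥ 0` and `β₀ β₁ < δ`, every complex zero of `Δ(·, τ)` has strictly
negative real part (linear stability of the nontrivial equilibrium for all `τ > 0`). -/
theorem charFn_zeros_neg_re_of_beta1_nonneg
    (δ β₀ β₁ τ : ℝ) (hδ : 0 < δ) (hβ₀ : 0 < β₀) (hτ : 0 < τ)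
    (hβ₁ : 0 ≤ β₁) (hlt : β₀ * β₁ < δ) :
    ∀ lam : ℂ, charFn δ β₀ β₁ τ lam = 0 → lam.re < 0 :=
  charFn_zeros_neg_re_of_beta1_nonneg_general δ β₀ β₁ τ hβ₀ hτ hβ₁ hlt
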